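/- Let Ω and Δ be locally compact Hausdorff spaces where Δ has no isolated points, X, Y Banach spaces, σ : Δ → Ω an injective map, and θ : C₀(Ω, X) → C₀(Δ, Y) a ℂ-linear map (not assumed bounded) such that for every ν ∈ Δ and every f ∈ C₀(Ω,X) vanishing on some neighbourhood of σ(ν), one has θ(f)(ν) = 0. Then θ is bounded. -/

import Mathlib

/-!
If `f ↦ θ f ν₀` were unbounded, a gliding hump would give a contradiction. Cutting a function off
near `σ ν₀` does not change `θ f ν₀`, and since `θ f` is continuous and `ν₀` is not isolated, a
large value at `ν₀` persists at some `ν ≠ ν₀`, where `σ ν ≠ σ ν₀`. Cutting off once more near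
`σ ν` yields humps `g n` of norm `< 2⁻ⁿ` with `‖θ (g n) (ν n)‖ > n`, supported in pairwise
disjoint compact sets that avoid `σ ν₀`. Their sum `F` agrees with `g n` near `σ (ν n)`, so
`‖θ F‖ > n` for every `n`. The pointwise bounds are then made uniform by Banach–Steinhaus.
-/

open ZeroAtInfty Filter Topology Set
open scoped BoundedContinuousFunction

theorem LinearMap.exists_norm_lt_and_lt_norm_apply {𝕜 E F : Type*} [NontriviallyNormedField 𝕜]
    [NormedAddCommGroup E] [NormedSpace 𝕜 E] [NormedAddCommGroup F] [NormedSpace 𝕜 F]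
    (f : E →ₗ[𝕜] F) (hf : ¬∃ C, ∀ x, ‖f x‖ ≤ C * ‖x‖) {ε : ℝ} (hε : 0 < ε) (M : ℝ) :
    ∃ x, ‖x‖ < ε ∧ M < ‖f x‖ := by
  by_contra! h
  exact hf (LinearMap.bound_of_ball_bound hε M f fun x hx => h x (mem_ball_zero_iff.1 hx))

namespace ZeroAtInftyContinuousMap

variable {α β : Type*} [TopologicalSpace α] [SeminormedAddCommGroup β]

theorem norm_apply_le (f : C₀(α, β)) (x : α) : ‖f x‖ ≤ ‖f‖ :=
  f.toBCF.norm_coe_le_norm x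

theorem norm_le {f : C₀(α, β)} {C : ℝ} (hC : 0 ≤ C) : ‖f‖ ≤ C ↔ ∀ x, ‖f x‖ ≤ C :=
  f.toBCF.norm_le hC

variable {𝕜 : Type*} [NormedField 𝕜] [NormedSpace 𝕜 β]

variable (𝕜) in
noncomputable def evalCLM (x : α) : C₀(α, β) →L[𝕜] β :=
  LinearMap.mkContinuous
    { toFun := fun f => f x
      map_add' := fun _ _ => rfl
      map_smul' := fun _ _ => rfl } 1
    fun f => by simpa using norm_apply_le f x

@[simp]
theorem evalCLM_apply (x : α) (f : C₀(α, β)) : evalCLM 𝕜 x f = f x := rfl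

instance : SMul (α →ᵇ 𝕜) C₀(α, β) where
  smul φ f :=
    { toFun := fun x => φ x • f x
      continuous_toFun := φ.continuous.smul f.continuous
      zero_at_infty' :=
        (isBoundedUnder_of ⟨‖φ‖, φ.norm_coe_le_norm⟩).smul_tendsto_zero (zero_at_infty f) }

@[simp]
theorem bcf_smul_apply (φ : α →ᵇ 𝕜) (f : C₀(α, β)) (x : α) : (φ • f) x = φ x • f x := rfl

theorem norm_bcf_smul_le (φ : α →ᵇ 𝕜) (f : C₀(α, β)) : ‖φ • f‖ ≤ ‖φ‖ * ‖f‖ :=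
  (norm_le (by positivity)).2 fun x =>
    (norm_smul_le _ _).trans (mul_le_mul (φ.norm_coe_le_norm x) (norm_apply_le f x)
      (norm_nonneg _) (norm_nonneg _))

theorem exists_eventuallyEq_compactlySupported [T2Space α] [LocallyCompactSpace α]
    [NormedSpace ℝ β] (f : C₀(α, β)) {U : Set α} (hU : IsOpen U) {x : α} (hx : x ∈ U) :
    ∃ (g : C₀(α, β)) (K : Set α), ‖g‖ ≤ ‖f‖ ∧ ⇑g =ᶠ[𝓝 x] f ∧ IsCompact K ∧ K ∈ 𝓝 x ∧ K ⊆ U ∧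
      ∀ y ∉ K, g y = 0 := by
  obtain ⟨K, hK, hxK, hKU⟩ := exists_compact_subset hU hx
  obtain ⟨L, hL, hxL, hLK⟩ := exists_compact_subset isOpen_interior hxK
  obtain ⟨φ, hφ1, hφ0, -, hφI⟩ := exists_continuous_one_zero_of_isCompact hL
    isOpen_interior.isClosed_compl (disjoint_compl_right_iff_subset.2 hLK)
  have hφ : ∀ y, ‖φ y‖ ≤ 1 := fun y => by
    rw [Real.norm_eq_abs, abs_le]; exact ⟨by linarith [(hφI y).1], (hφI y).2⟩
  let ψ : α →ᵇ ℝ := .ofNormedAddCommGroup φ φ.continuous 1 hφ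
  refine ⟨ψ • f, K, ?_, ?_, hK, mem_interior_iff_mem_nhds.1 hxK, hKU, fun y hy => ?_⟩
  · calc ‖ψ • f‖ ≤ ‖ψ‖ * ‖f‖ := norm_bcf_smul_le ψ f
      _ ≤ 1 * ‖f‖ := by
        gcongr; exact BoundedContinuousFunction.norm_ofNormedAddCommGroup_le _ zero_le_one _
      _ = ‖f‖ := one_mul _
  · filter_upwards [mem_interior_iff_mem_nhds.1 hxL] with y hy
    simp [ψ, show φ y = 1 from hφ1 hy]
  · simp [ψ, hφ0 (fun h => hy (interior_subset h))]

theorem exists_bound_of_exists_bound_apply {𝕜 E Δ Y : Type*} [NontriviallyNormedField 𝕜]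
    [NormedAddCommGroup E] [NormedSpace 𝕜 E] [CompleteSpace E] [TopologicalSpace Δ]
    [NormedAddCommGroup Y] [NormedSpace 𝕜 Y] (θ : E →ₗ[𝕜] C₀(Δ, Y))
    (h : ∀ ν, ∃ C, ∀ f, ‖θ f ν‖ ≤ C * ‖f‖) : ∃ C, ∀ f, ‖θ f‖ ≤ C * ‖f‖ := by
  choose C hC using h
  let T : Δ → E →L[𝕜] Y := fun ν => ((evalCLM 𝕜 ν).toLinearMap ∘ₗ θ).mkContinuous (C ν) (hC ν)
  obtain ⟨C', hC'⟩ := banach_steinhaus (g := T) fun f => ⟨‖θ f‖, fun ν => norm_apply_le (θ f) ν⟩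
  refine ⟨max C' 0, fun f => (norm_le (by positivity)).2 fun ν => ?_⟩
  calc ‖θ f ν‖ = ‖T ν f‖ := rfl
    _ ≤ ‖T ν‖ * ‖f‖ := (T ν).le_opNorm f
    _ ≤ max C' 0 * ‖f‖ := by gcongr; exact (hC' ν).trans (le_max_left _ _)

end ZeroAtInftyContinuousMap

section SupportMap

variable {Ω Δ X Y : Type*} [TopologicalSpace Ω] [TopologicalSpace Δ]
  [NormedAddCommGroup X] [NormedSpace ℂ X] [NormedAddCommGroup Y] [NormedSpace ℂ Y]

def IsSupportMap (σ : Δ → Ω) (θ : C₀(Ω, X) →ₗ[ℂ] C₀(Δ, Y)) : Prop :=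
  ∀ ν (f : C₀(Ω, X)), ⇑f =ᶠ[𝓝 (σ ν)] 0 → θ f ν = 0

structure GlidingHump (σ : Δ → Ω) (θ : C₀(Ω, X) →ₗ[ℂ] C₀(Δ, Y)) (ν₀ : Δ) where
  level : ℕ
  point : Δ
  fn : C₀(Ω, X)
  support : Set Ω
  norm_fn_lt : ‖fn‖ < 2⁻¹ ^ level
  level_lt_norm : (level : ℝ) < ‖θ fn point‖
  isCompact_support : IsCompact support
  support_mem_nhds : support ∈ 𝓝 (σ point)
  notMem_support : σ ν₀ ∉ support
  fn_eq_zero : ∀ x ∉ support, fn x = 0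

namespace IsSupportMap

variable {σ : Δ → Ω} {θ : C₀(Ω, X) →ₗ[ℂ] C₀(Δ, Y)}

theorem apply_congr (hθ : IsSupportMap σ θ) {ν : Δ} {f g : C₀(Ω, X)}
    (h : ⇑f =ᶠ[𝓝 (σ ν)] g) : θ f ν = θ g ν := by
  have := hθ ν (f - g) (by filter_upwards [h] with x hx; simp [hx])
  rwa [map_sub, ZeroAtInftyContinuousMap.sub_apply, sub_eq_zero] at this

variable [LocallyCompactSpace Ω] [T2Space Ω] {ν₀ : Δ}

theorem exists_large_apply_ne (hθ : IsSupportMap σ θ) (hσ : σ.Injective) (hν₀ : (𝓝[≠] ν₀).NeBot)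
    (hunb : ¬∃ C, ∀ f, ‖θ f ν₀‖ ≤ C * ‖f‖) {W : Set Ω} (hW : IsOpen W) (hν₀W : σ ν₀ ∈ W)
    {ε : ℝ} (hε : 0 < ε) {M : ℝ} (hM : 0 ≤ M) :
    ∃ g ν, ‖g‖ < ε ∧ M < ‖θ g ν‖ ∧ σ ν ∈ W ∧ σ ν ≠ σ ν₀ := by
  obtain ⟨g₁, hg₁, hθg₁⟩ :=
    ((ZeroAtInftyContinuousMap.evalCLM ℂ ν₀).toLinearMap ∘ₗ θ).exists_norm_lt_and_lt_norm_apply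
      hunb hε M
  obtain ⟨g, K, hgg₁, hgν₀, hK, -, hKW, hgK⟩ := g₁.exists_eventuallyEq_compactlySupported hW hν₀W
  have hθg : M < ‖θ g ν₀‖ := by rwa [hθ.apply_congr hgν₀]
  have := hν₀
  obtain ⟨ν, hθgν, hν⟩ : ∃ ν, M < ‖θ g ν‖ ∧ ν ≠ ν₀ :=
    (((θ g).continuous.norm.continuousAt.eventually (lt_mem_nhds hθg)).filter_mono
      nhdsWithin_le_nhds |>.and (self_mem_nhdsWithin (s := {ν₀}ᶜ))).exists
  have hνK : σ ν ∈ K := by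
    by_contra hνK
    have : θ g ν = 0 := hθ ν g <| by
      filter_upwards [hK.isClosed.isOpen_compl.mem_nhds hνK] with y hy using hgK y hy
    rw [this, norm_zero] at hθgν
    exact hθgν.not_ge hM
  exact ⟨g, ν, hgg₁.trans_lt hg₁, hθgν, hKW hνK, hσ.ne hν⟩

theorem exists_gliding_hump (hθ : IsSupportMap σ θ) (hσ : σ.Injective) (hν₀ : (𝓝[≠] ν₀).NeBot)
    (hunb : ¬∃ C, ∀ f, ‖θ f ν₀‖ ≤ C * ‖f‖) (k : ℕ) {W : Set Ω} (hW : IsOpen W) (hν₀W : σ ν₀ ∈ W) :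
    ∃ h : GlidingHump σ θ ν₀, h.level = k ∧ h.support ⊆ W := by
  obtain ⟨g, ν, hg, hθg, hνW, hνν₀⟩ :=
    hθ.exists_large_apply_ne hσ hν₀ hunb hW hν₀W (by positivity : (0 : ℝ) < 2⁻¹ ^ k) k.cast_nonneg
  obtain ⟨g', K, hg'g, hg'ν, hK, hKν, hKW, hg'K⟩ :=
    g.exists_eventuallyEq_compactlySupported (hW.sdiff isClosed_singleton) ⟨hνW, hνν₀⟩
  exact ⟨⟨k, ν, g', K, hg'g.trans_lt hg, by rwa [hθ.apply_congr hg'ν], hK, hKν,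
    fun h => (hKW h).2 rfl, hg'K⟩, rfl, fun x hx => (hKW hx).1⟩

theorem exists_bound_apply [CompleteSpace X] (hθ : IsSupportMap σ θ) (hσ : σ.Injective)
    (hν₀ : (𝓝[≠] ν₀).NeBot) : ∃ C, ∀ f, ‖θ f ν₀‖ ≤ C * ‖f‖ := by
  by_contra hunb
  obtain ⟨h, -, hh⟩ := exists_seq_of_forall_finset_exists (fun _ : GlidingHump σ θ ν₀ => True)
    (fun a b => a.level < b.level ∧ Disjoint a.support b.support) fun s _ => by
      obtain ⟨b, hb, hbW⟩ := hθ.exists_gliding_hump hσ hν₀ hunb (s.sup GlidingHump.level + 1)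
        (s.finite_toSet.isClosed_biUnion fun a _ => a.isCompact_support.isClosed).isOpen_compl
        (by simpa using fun a _ => a.notMem_support)
      refine ⟨b, trivial, fun a ha => ⟨hb ▸ Nat.lt_succ_of_le (s.le_sup ha), ?_⟩⟩
      exact (disjoint_compl_right_iff_subset.2 (subset_biUnion_of_mem ha)).mono_right hbW
  have hlevel : ∀ n, n ≤ (h n).level := fun _ =>
    (strictMono_nat_of_lt_succ fun n => (hh n _ n.lt_succ_self).1).le_apply
  have hsum : Summable fun n => (h n).fn :=
    .of_norm_bounded (summable_geometric_of_lt_one (by norm_num) (by norm_num : (2⁻¹ : ℝ) < 1))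
      fun n => (h n).norm_fn_lt.le.trans
        (pow_le_pow_of_le_one (by norm_num) (by norm_num) (hlevel n))
  set F := ∑' n, (h n).fn
  have hF : ∀ n, ⇑F =ᶠ[𝓝 (σ (h n).point)] (h n).fn := fun n => by
    filter_upwards [(h n).support_mem_nhds] with y hy
    rw [← ZeroAtInftyContinuousMap.evalCLM_apply (𝕜 := ℂ), ContinuousLinearMap.map_tsum _ hsum]
    refine tsum_eq_single n fun m hm => (h m).fn_eq_zero y fun hym => ?_
    rcases hm.lt_or_gt with hmn | hmn
    · exact (hh m n hmn).2.notMem_of_mem_left hym hy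
    · exact (hh n m hmn).2.notMem_of_mem_left hy hym
  obtain ⟨n, hn⟩ := exists_nat_gt ‖θ F‖
  refine hn.not_ge ?_
  calc (n : ℝ) ≤ (h n).level := by exact_mod_cast hlevel n
    _ ≤ ‖θ (h n).fn (h n).point‖ := (h n).level_lt_norm.le
    _ = ‖θ F (h n).point‖ := by rw [hθ.apply_congr (hF n)]
    _ ≤ ‖θ F‖ := ZeroAtInftyContinuousMap.norm_apply_le _ _

end IsSupportMap

end SupportMap

theorem stmt_9_general
    {Ω Δ : Type*} [TopologicalSpace Ω] [LocallyCompactSpace Ω] [T2Space Ω]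
    [TopologicalSpace Δ]
    (hni : ∀ ν : Δ, (𝓝[≠] ν).NeBot)
    {X Y : Type*} [NormedAddCommGroup X] [NormedSpace ℂ X] [CompleteSpace X]
    [NormedAddCommGroup Y] [NormedSpace ℂ Y]
    (σ : Δ → Ω) (hσ : Function.Injective σ)
    (θ : C₀(Ω, X) →ₗ[ℂ] C₀(Δ, Y))
    (hloc : ∀ (ν : Δ) (f : C₀(Ω, X)),
      (∃ U : Set Ω, IsOpen U ∧ σ ν ∈ U ∧ ∀ ω ∈ U, f ω = 0) → θ f ν = 0) :
    ∃ C : ℝ, ∀ f : C₀(Ω, X), ‖θ f‖ ≤ C * ‖f‖ := by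
  have hθ : IsSupportMap σ θ := fun ν f hf => by
    obtain ⟨U, hU, hUo, hνU⟩ := eventually_nhds_iff.1 hf
    exact hloc ν f ⟨U, hUo, hνU, hU⟩
  exact ZeroAtInftyContinuousMap.exists_bound_of_exists_bound_apply θ fun ν =>
    hθ.exists_bound_apply hσ (hni ν)

theorem stmt_9
    {Ω Δ : Type*} [TopologicalSpace Ω] [LocallyCompactSpace Ω] [T2Space Ω]
    [TopologicalSpace Δ] [LocallyCompactSpace Δ] [T2Space Δ]
    (hni : ∀ ν : Δ, (𝓝[≠] ν).NeBot)
    {X Y : Type*} [NormedAddCommGroup X] [NormedSpace ℂ X] [CompleteSpace X]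
    [NormedAddCommGroup Y] [NormedSpace ℂ Y] [CompleteSpace Y]
    (σ : Δ → Ω) (hσ : Function.Injective σ)
    (θ : C₀(Ω, X) →ₗ[ℂ] C₀(Δ, Y))
    (hloc : ∀ (ν : Δ) (f : C₀(Ω, X)),
      (∃ U : Set Ω, IsOpen U ∧ σ ν ∈ U ∧ ∀ ω ∈ U, f ω = 0) → θ f ν = 0) :
    ∃ C : ℝ, ∀ f : C₀(Ω, X), ‖θ f‖ ≤ C * ‖f‖ :=
  stmt_9_general hni σ hσ θ hloc
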